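/- Let N ≥ 2 and let {|u^m_i⟩}, m = 1,…,N, be N orthonormal bases of ℂ^d. Then the quantity b = max_{i_N} { ∑_{i_2,…,i_{N−1}} max_{i_1}[c(u^1_{i_1}, u^2_{i_2})] · ∏_{m=2}^{N−1} c(u^m_{i_m}, u^{m+1}_{i_{m+1}}) } satisfies b ≤ max_{i_1,i_2} c(u^1_{i_1}, u^2_{i_2}); consequently −log₂(b) ≥ −log₂( max_{i_1,i_2} c(u^1_{i_1}, u^2_{i_2}) ), i.e. the multi-measurement bound is never weaker than the two-measurement Maassen–Uffink bound for M_1 and M_2. -/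

import Mathlib

open scoped BigOperators ComplexOrder

noncomputable section

/-- Standard inner product `⟨a|b⟩` on `ℂ^d` (conjugate-linear in the first argument). -/
def inn {d : ℕ} (a b : Fin d → ℂ) : ℂ := ∑ k, (starRingEnd ℂ) (a k) * b k

/-- The overlap `c(a,b) = |⟨a|b⟩|²`. -/
def ov {d : ℕ} (a b : Fin d → ℂ) : ℝ := ‖inn a b‖ ^ 2

/-- `u` lists the vectors of an orthonormal basis of `ℂ^d`. -/
def IsONB {d : ℕ} (u : Fin d → Fin d → ℂ) : Prop :=
  ∀ i j, inn (u i) (u j) = if i = j then 1 else 0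

/-- Shannon entropy (base 2) of a probability vector; note `Real.logb 2 0 = 0`. -/
def shannon {d : ℕ} (p : Fin d → ℝ) : ℝ := -∑ i, p i * Real.logb 2 (p i)

/-- Outcome probabilities `p_i = ⟨u_i|ρ|u_i⟩` of a projective measurement on the state `ρ`. -/
def probM {d : ℕ} (ρ : Matrix (Fin d) (Fin d) ℂ) (v : Fin d → Fin d → ℂ) (i : Fin d) : ℝ :=
  (dotProduct (star (v i)) (ρ.mulVec (v i))).re

open Classical in
/-- Von Neumann entropy (base 2): `S(ρ) = -∑ λ_k log₂ λ_k` over the eigenvalues of `ρ`. -/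
def vNEnt {ι : Type} [Fintype ι] [DecidableEq ι] (A : Matrix ι ι ℂ) : ℝ :=
  if h : A.IsHermitian then -∑ k, h.eigenvalues k * Real.logb 2 (h.eigenvalues k) else 0

open Classical in
/-- Matrix base-2 logarithm on the support, via the spectral decomposition
(eigenvalue `0` is sent to `0` since `Real.logb 2 0 = 0`). -/
def mlog2 {ι : Type} [Fintype ι] [DecidableEq ι] (A : Matrix ι ι ℂ) : Matrix ι ι ℂ :=
  if h : A.IsHermitian then
    (h.eigenvectorUnitary : Matrix ι ι ℂ) *
      Matrix.diagonal (fun k => (Real.logb 2 (h.eigenvalues k) : ℂ)) *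
      star (h.eigenvectorUnitary : Matrix ι ι ℂ)
  else 0

/-- Quantum relative entropy `S(ρ‖σ) = Tr(ρ log₂ ρ) - Tr(ρ log₂ σ)`. -/
def relEnt {ι : Type} [Fintype ι] [DecidableEq ι] (ρ σ : Matrix ι ι ℂ) : ℝ :=
  ((ρ * mlog2 ρ).trace - (ρ * mlog2 σ).trace).re

/-- The bound `b` of Theorem 2 of the paper, for `N = n + 2` measurements (indexed `0,…,n+1`):
`b = max_{i_N} { ∑_{i_2,…,i_{N-1}} max_{i_1}[c(u^1_{i_1},u^2_{i_2})]
  ∏_{m=2}^{N-1} c(u^m_{i_m},u^{m+1}_{i_{m+1}}) }`.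
Here `g : Fin n → Fin d` lists the middle indices `(i_2,…,i_{N-1})`, `jN = i_N`, and
`Fin.snoc g jN : Fin (n+1) → Fin d` is the chain `(i_2,…,i_N)`. -/
def bBound {d n : ℕ} (u : Fin (n + 2) → Fin d → Fin d → ℂ) : ℝ :=
  ⨆ jN : Fin d, ∑ g : Fin n → Fin d,
    (⨆ i1 : Fin d, ov (u 0 i1) (u 1 ((Fin.snoc g jN : Fin (n + 1) → Fin d) 0))) *
      ∏ k : Fin n, ov (u k.succ.castSucc ((Fin.snoc g jN : Fin (n + 1) → Fin d) k.castSucc))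
        (u k.succ.succ ((Fin.snoc g jN : Fin (n + 1) → Fin d) k.succ))

/-- Partial trace over system `A`: `(Tr_A X)_{j j'} = ∑_i X_{(i,j),(i,j')}`. -/
def trA {d dB : ℕ} (X : Matrix (Fin d × Fin dB) (Fin d × Fin dB) ℂ) :
    Matrix (Fin dB) (Fin dB) ℂ :=
  Matrix.of fun j j' => ∑ i, X (i, j) (i, j')

/-- The operator `|a⟩⟨a| ⊗ I` acting on `ℂ^d ⊗ ℂ^{dB}`. -/
def projA {d : ℕ} (dB : ℕ) (a : Fin d → ℂ) : Matrix (Fin d × Fin dB) (Fin d × Fin dB) ℂ :=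
  Matrix.kroneckerMap (· * ·) (Matrix.vecMulVec a (star a)) (1 : Matrix (Fin dB) (Fin dB) ℂ)

end

/-!
For each final index `i_N`, summing the overlap chain `∏_{m ≥ 2} c(u^m_{i_m}, u^{m+1}_{i_{m+1}})`
over `i_2, …, i_{N-1}` gives `1`, because by Parseval `∑_i c(u^m_i, v) = 1` for every unit
vector `v`. So for each `i_N` the expression inside the maximum defining `b` is an average of
the numbers `max_{i_1} c(u^1_{i_1}, u^2_{i_2})`, each at most the Maassen–Uffink overlap and at
least `1/d`. Hence `1/d ≤ b ≤ max_{i_1,i_2} c(u^1_{i_1}, u^2_{i_2})`, and the bound on `-log₂`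
follows because `log₂` is monotone on positive reals.
-/

open scoped InnerProductSpace

lemma inn_eq_inner {d : ℕ} (a b : Fin d → ℂ) :
    inn a b = ⟪WithLp.toLp 2 a, WithLp.toLp 2 b⟫_ℂ := by
  simp [inn, EuclideanSpace.inner_toLp_toLp, dotProduct, mul_comm]

lemma ov_nonneg {d : ℕ} (a b : Fin d → ℂ) : 0 ≤ ov a b := sq_nonneg _

namespace IsONB

variable {d : ℕ} {u : Fin d → Fin d → ℂ}

lemma orthonormal (hu : IsONB u) : Orthonormal ℂ fun i => WithLp.toLp 2 (u i) := by
  classical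
  exact orthonormal_iff_ite.2 fun i j => by rw [← inn_eq_inner, hu]

noncomputable def toOrthonormalBasis (hu : IsONB u) :
    OrthonormalBasis (Fin d) ℂ (EuclideanSpace ℂ (Fin d)) :=
  .mk hu.orthonormal
    (hu.orthonormal.linearIndependent.span_eq_top_of_card_eq_finrank' (by simp)).ge

lemma sum_ov_eq_one (hu : IsONB u) {v : Fin d → ℂ} (hv : inn v v = 1) :
    ∑ i, ov (u i) v = 1 := by
  have hv' : ‖WithLp.toLp 2 v‖ ^ 2 = (1 : ℝ) := by
    rw [@norm_sq_eq_re_inner ℂ, ← inn_eq_inner, hv, RCLike.one_re]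
  simpa [ov, inn_eq_inner, toOrthonormalBasis] using
    hu.toOrthonormalBasis.sum_sq_norm_inner_right (WithLp.toLp 2 v) |>.trans hv'

lemma inv_card_le_iSup_ov (hu : IsONB u) {v : Fin d → ℂ} (hv : inn v v = 1) :
    (d : ℝ)⁻¹ ≤ ⨆ i, ov (u i) v :=
  calc (d : ℝ)⁻¹ = (d : ℝ)⁻¹ * ∑ i, ov (u i) v := by rw [hu.sum_ov_eq_one hv, mul_one]
    _ ≤ (d : ℝ)⁻¹ * (d * ⨆ i, ov (u i) v) := by
      gcongr
      simpa using Finset.sum_le_card_nsmul Finset.univ _ _ fun i _ =>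
        le_ciSup (Set.finite_range fun i => ov (u i) v).bddAbove i
    _ ≤ ⨆ i, ov (u i) v := by
      rw [← mul_assoc]
      exact mul_le_of_le_one_left (Real.iSup_nonneg fun i => ov_nonneg _ _) inv_mul_le_one

end IsONB

theorem sum_prod_chain_eq_one {α R : Type*} [Fintype α] [CommSemiring R] {n : ℕ}
    (c : Fin n → α → α → R) (hc : ∀ k j, ∑ i, c k i j = 1) (last : α) :
    ∑ g : Fin n → α, ∏ k : Fin n, c k ((Fin.snoc g last : Fin (n + 1) → α) k.castSucc)
      ((Fin.snoc g last : Fin (n + 1) → α) k.succ) = 1 := by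
  induction n with
  | zero => simp
  | succ n ih =>
    rw [← (Fin.consEquiv fun _ => α).sum_comp, Fintype.sum_prod_type, Finset.sum_comm]
    refine (Finset.sum_congr rfl fun g _ => ?_).trans (ih (fun k => c k.succ) fun k => hc k.succ)
    simp only [Fin.consEquiv, Equiv.coe_fn_mk, ← Fin.cons_snoc_eq_snoc_cons, Fin.prod_univ_succ,
      Fin.cons_zero, Fin.castSucc_zero, ← Fin.succ_castSucc, Fin.cons_succ]
    rw [← Finset.sum_mul, hc, one_mul]

section Averages

variable {ι R : Type*} [Fintype ι] [Semiring R] [PartialOrder R] [IsOrderedRing R]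
  {f w : ι → R} {a : R}

theorem sum_mul_le_of_le (hw : ∀ i, 0 ≤ w i) (hw1 : ∑ i, w i = 1) (hf : ∀ i, f i ≤ a) :
    ∑ i, f i * w i ≤ a :=
  calc ∑ i, f i * w i ≤ ∑ i, a * w i := by gcongr with i; exacts [hw i, hf i]
    _ = a := by rw [← Finset.mul_sum, hw1, mul_one]

theorem le_sum_mul_of_le (hw : ∀ i, 0 ≤ w i) (hw1 : ∑ i, w i = 1) (hf : ∀ i, a ≤ f i) :
    a ≤ ∑ i, f i * w i :=
  calc a = ∑ i, a * w i := by rw [← Finset.mul_sum, hw1, mul_one]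
    _ ≤ ∑ i, f i * w i := by gcongr with i; exacts [hw i, hf i]

end Averages

/-- `b ≤ max_{i_1,i_2} c(u^1_{i_1},u^2_{i_2})`, so the multi-measurement bound
`-log₂ b` is never weaker than the two-measurement Maassen–Uffink bound for `M_1, M_2`. -/
theorem bBound_le_MU {d n : ℕ} (hd : 0 < d) (u : Fin (n + 2) → Fin d → Fin d → ℂ)
    (hu : ∀ m, IsONB (u m)) :
    bBound u ≤ (⨆ i1 : Fin d, ⨆ i2 : Fin d, ov (u 0 i1) (u 1 i2)) ∧
      -Real.logb 2 (bBound u) ≥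
        -Real.logb 2 (⨆ i1 : Fin d, ⨆ i2 : Fin d, ov (u 0 i1) (u 1 i2)) := by
  have : NeZero d := ⟨hd.ne'⟩
  have hunit : ∀ m i, inn (u m i) (u m i) = 1 := fun m i => by simpa using hu m i i
  have hweight_nonneg : ∀ (jN : Fin d) (g : Fin n → Fin d), 0 ≤ ∏ k : Fin n,
      ov (u k.succ.castSucc ((Fin.snoc g jN : Fin (n + 1) → Fin d) k.castSucc))
        (u k.succ.succ ((Fin.snoc g jN : Fin (n + 1) → Fin d) k.succ)) :=
    fun jN g => Finset.prod_nonneg fun k _ => ov_nonneg _ _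
  have hweight_sum (jN : Fin d) := sum_prod_chain_eq_one
    (fun k i j => ov (u k.succ.castSucc i) (u k.succ.succ j))
    (fun k j => (hu _).sum_ov_eq_one (hunit _ j)) jN
  have hfirst_le (j : Fin d) : ⨆ i1, ov (u 0 i1) (u 1 j) ≤ ⨆ i1, ⨆ i2, ov (u 0 i1) (u 1 i2) :=
    ciSup_mono (Set.finite_range _).bddAbove fun i1 =>
      le_ciSup (Set.finite_range fun i2 => ov (u 0 i1) (u 1 i2)).bddAbove j
  have hub : bBound u ≤ ⨆ i1, ⨆ i2, ov (u 0 i1) (u 1 i2) :=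
    ciSup_le fun jN => sum_mul_le_of_le (hweight_nonneg jN) (hweight_sum jN) fun _ => hfirst_le _
  have hlb : (d : ℝ)⁻¹ ≤ bBound u :=
    le_ciSup_of_le (Set.finite_range _).bddAbove 0 <| le_sum_mul_of_le
      (hweight_nonneg _) (hweight_sum _) fun _ => (hu 0).inv_card_le_iSup_ov (hunit 1 _)
  have hb_pos : 0 < bBound u := (inv_pos.2 (Nat.cast_pos.2 hd)).trans_le hlb
  exact ⟨hub, neg_le_neg (Real.logb_le_logb_of_le one_lt_two hb_pos hub)⟩
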